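/- Let a > 0, G₀ > 0, c > 0, ℓ₁ > 0 and t > t₁ be real numbers, let γ denote the Euler–Mascheroni constant, and let P_t and P_{t₁} be real numbers satisfying the pressure relation (5): P_t = P_{t₁} + (2·c²·G₀/ℓ₁)·(t−t₁)·(1−γ) − 2·a·G₀·ℓ₁·(1/3 + 2/π²). Set Z := P_t − P_{t₁} and Z₁ := 2·a·G₀·(1/3 + 2/π²). Then ℓ₁ = (√(Z² + 8·c²·G₀·(1−γ)·(t−t₁)·Z₁) − Z)/(2·Z₁). -/

import Mathlib

theorem eq_quadratic_pos_root {A B K x : ℝ} (hA : 0 < A) (hK : 0 ≤ K) (hx : 0 < x)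
    (h : A * x ^ 2 + B * x = K) :
    x = (Real.sqrt (B ^ 2 + 4 * A * K) - B) / (2 * A) := by
  have hdisc : B ^ 2 + 4 * A * K = (2 * A * x + B) ^ 2 := by rw [← h]; ring
  have hroot : 0 ≤ 2 * A * x + B := by nlinarith
  rw [hdisc, Real.sqrt_sq hroot]
  field_simp
  ring

theorem valve_location_recovered_general (a G₀ c ℓ₁ t t₁ P_t P_t₁ : ℝ)
    (ha : 0 < a) (hG : 0 < G₀) (hℓ : 0 < ℓ₁) (ht : t₁ < t)
    (hP : P_t = P_t₁ + (2 * c ^ 2 * G₀ / ℓ₁) * (t - t₁) * (1 - Real.eulerMascheroniConstant)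
        - 2 * a * G₀ * ℓ₁ * (1 / 3 + 2 / Real.pi ^ 2))
    (Z : ℝ) (hZ : Z = P_t - P_t₁)
    (Z₁ : ℝ) (hZ₁ : Z₁ = 2 * a * G₀ * (1 / 3 + 2 / Real.pi ^ 2)) :
    ℓ₁ = (Real.sqrt (Z ^ 2 + 8 * c ^ 2 * G₀ * (1 - Real.eulerMascheroniConstant)
        * (t - t₁) * Z₁) - Z) / (2 * Z₁) := by
  set K := 2 * c ^ 2 * G₀ * (t - t₁) * (1 - Real.eulerMascheroniConstant) with hK
  have hγ : Real.eulerMascheroniConstant < 1 :=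
    Real.eulerMascheroniConstant_lt_two_thirds.trans (by norm_num)
  have hZ₁pos : 0 < Z₁ := by rw [hZ₁]; positivity
  have hKnonneg : 0 ≤ K := by
    have : 0 < t - t₁ := sub_pos.mpr ht
    have : 0 < 1 - Real.eulerMascheroniConstant := sub_pos.mpr hγ
    positivity
  -- equation (6): (5) multiplied by `ℓ₁`
  have hquad : Z₁ * ℓ₁ ^ 2 + Z * ℓ₁ = K := by
    rw [hZ, hP, hZ₁, hK]
    field_simp
    ring
  have hdisc : 8 * c ^ 2 * G₀ * (1 - Real.eulerMascheroniConstant) * (t - t₁) * Z₁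
      = 4 * Z₁ * K := by
    rw [hK]; ring
  rw [hdisc]
  exact eq_quadratic_pos_root hZ₁pos hKnonneg hℓ hquad

theorem valve_location_recovered (a G₀ c ℓ₁ t t₁ P_t P_t₁ : ℝ)
    (ha : 0 < a) (hG : 0 < G₀) (hc : 0 < c) (hℓ : 0 < ℓ₁) (ht : t₁ < t)
    (hP : P_t = P_t₁ + (2 * c ^ 2 * G₀ / ℓ₁) * (t - t₁) * (1 - Real.eulerMascheroniConstant)
        - 2 * a * G₀ * ℓ₁ * (1 / 3 + 2 / Real.pi ^ 2))
    (Z : ℝ) (hZ : Z = P_t - P_t₁)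
    (Z₁ : ℝ) (hZ₁ : Z₁ = 2 * a * G₀ * (1 / 3 + 2 / Real.pi ^ 2)) :
    ℓ₁ = (Real.sqrt (Z ^ 2 + 8 * c ^ 2 * G₀ * (1 - Real.eulerMascheroniConstant)
        * (t - t₁) * Z₁) - Z) / (2 * Z₁) :=
  valve_location_recovered_general a G₀ c ℓ₁ t t₁ P_t P_t₁ ha hG hℓ ht hP Z hZ Z₁ hZ₁
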